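/- Let Q̃ be a type A quiver on {1,…,n′} whose full subquiver Q on {1,…,n} is linear, let s be a GCS with ℓ = n − Σ_i s_i ≥ 1, and let w_i, s^{(i)}, m_i (i ∈ [0,ℓ]) be as in the context. Let ε > 0 satisfy (1+ε)^n < 2, and let q = (q_1,…,q_{n′}) ∈ ℝ^{n′} satisfy: q_j > 0 for all j, q_j ≤ ε·q_1 for all j ∈ [n+1,n′], and q_r ≤ ε·q_{r+1} for all r ∈ [1,n−1]. Define Q_{ℓ+1} = q and, for i = ℓ down to 1, Q_i = Q_{i+1} + (Q_{i+1})_{w_i}·m_i. Then for all 1 ≤ i < i′ ≤ ℓ+1, |(Q_{i′})_{w_i} − q_{w_i}| ≤ ((1+ε)^{ℓ+1−i′} − 1)·q_{w_i}; in particular (Q_{i+1})_{w_i} > 0 for every i ∈ [1,ℓ], so Q_i − Q_{i+1} is a positive real multiple of m_i, and (Q_i)_{w_i} = 0. -/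

import Mathlib

open scoped Classical

noncomputable section

/-- Skew-symmetry: the defining property of the matrix encoding of a quiver. -/
def IsSkew {m : ℕ} (B : Matrix (Fin m) (Fin m) ℤ) : Prop := ∀ i j, B j i = -B i j

/-- The underlying (simple) graph of the quiver. -/
def underlying {m : ℕ} (B : Matrix (Fin m) (Fin m) ℤ) : SimpleGraph (Fin m) :=
  SimpleGraph.fromRel (fun i j => B i j ≠ 0)

/-- `i → j → k → i` is an oriented 3-cycle of the quiver. -/
def IsCyc3 {m : ℕ} (B : Matrix (Fin m) (Fin m) ℤ) (i j k : Fin m) : Prop :=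
  0 < B i j ∧ 0 < B j k ∧ 0 < B k i

/-- Degree of a vertex in the underlying graph. -/
def udeg {m : ℕ} (B : Matrix (Fin m) (Fin m) ℤ) (v : Fin m) : ℕ :=
  (Finset.univ.filter fun j => (underlying B).Adj v j).card

/-- The number of triangles (3-cycles of the underlying graph) containing `v`. -/
def triCount {m : ℕ} (B : Matrix (Fin m) (Fin m) ℤ) (v : Fin m) : ℕ :=
  (Finset.univ.filter fun p : Fin m × Fin m =>
    p.1 < p.2 ∧ (underlying B).Adj v p.1 ∧ (underlying B).Adj v p.2 ∧
      (underlying B).Adj p.1 p.2).card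

/-- `B` encodes a type `A` quiver: a quiver (no loops, no 2-cycles, and at most one
arrow between two vertices — a pair of parallel arrows would be a length-2 simple
cycle of the underlying multigraph) whose underlying graph is connected, all of whose
simple cycles have length 3 and are oriented, all of whose vertices have degree ≤ 4,
every degree-4 vertex lying on two triangles and every degree-3 vertex on one. -/
def IsTypeA {m : ℕ} (B : Matrix (Fin m) (Fin m) ℤ) : Prop :=
  IsSkew B ∧ (∀ i j, (B i j).natAbs ≤ 1) ∧
  (underlying B).Connected ∧
  (∀ (v : Fin m) (w : (underlying B).Walk v v), w.IsCycle → w.length = 3) ∧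
  (∀ i j k, (underlying B).Adj i j → (underlying B).Adj j k → (underlying B).Adj k i →
    IsCyc3 B i j k ∨ IsCyc3 B i k j) ∧
  (∀ v, udeg B v ≤ 4) ∧
  (∀ v, udeg B v = 4 → triCount B v = 2) ∧
  (∀ v, udeg B v = 3 → triCount B v = 1)

/-- The full subquiver of (the quiver encoded by) `B` on the first `n` vertices is
linear: exactly one arrow between consecutive vertices `i, i+1` (in either direction)
and no other arrows among the first `n` vertices. -/
def LinearOn {n' : ℕ} (B : Matrix (Fin n') (Fin n') ℤ) (n : ℕ) (hn : n ≤ n') : Prop :=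
  (∀ (i : ℕ) (h : i + 1 < n),
      B ⟨i, by omega⟩ ⟨i + 1, by omega⟩ ≠ 0) ∧
  (∀ (i j : ℕ) (hi : i < n) (hj : j < n), j ≠ i + 1 → i ≠ j + 1 →
      B ⟨i, by omega⟩ ⟨j, by omega⟩ = 0)

/-- A GCS for the linear subquiver `Q` on the first `n` vertices: `s ∈ {0,1}^n` with
`(s_i, s_j) ≠ (1, 0)` for every arrow `i → j` of `Q`. -/
def IsGCSlin {n' n : ℕ} (hn : n ≤ n') (B : Matrix (Fin n') (Fin n') ℤ)
    (s : Fin n → Bool) : Prop :=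
  ∀ i j : Fin n, 0 < B (Fin.castLE hn i) (Fin.castLE hn j) →
    ¬ (s i = true ∧ s j = false)

/-- `deg^{1→}_{Q,s}(r)`: the number of arrows `j → r` of `Q̃` with `j ∈ [1,n]` and
`s_j = 1`. -/
def deg1to {n' n : ℕ} (hn : n ≤ n') (B : Matrix (Fin n') (Fin n') ℤ)
    (s : Fin n → Bool) (r : Fin n') : ℕ :=
  ∑ j : Fin n, if s j = true then (B (Fin.castLE hn j) r).toNat else 0

/-- `deg^{0←}_{Q,s}(r)`: the number of arrows `r → j` of `Q̃` with `j ∈ [1,n]` and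
`s_j = 0`. -/
def deg0from {n' n : ℕ} (hn : n ≤ n') (B : Matrix (Fin n') (Fin n') ℤ)
    (s : Fin n → Bool) (r : Fin n') : ℕ :=
  ∑ j : Fin n, if s j = false then (B r (Fin.castLE hn j)).toNat else 0

/-- The vector `g_Q(s) ∈ ℤ^{n'}`. -/
def gQ {n' n : ℕ} (hn : n ≤ n') (B : Matrix (Fin n') (Fin n') ℤ)
    (s : Fin n → Bool) (r : Fin n') : ℤ :=
  if (r : ℕ) < n ∨ ∃ i j : Fin n, IsCyc3 B r (Fin.castLE hn i) (Fin.castLE hn j) then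
    (deg1to hn B s r : ℤ) + (deg0from hn B s r : ℤ) - 1
  else (deg1to hn B s r : ℤ) + (deg0from hn B s r : ℤ)

/-- `w` is an adjustable position for the GCS `s`: `s_w = 0` and flipping the `w`-th
coordinate to `1` yields again a GCS. -/
def Adjustable {n' n : ℕ} (hn : n ≤ n') (B : Matrix (Fin n') (Fin n') ℤ)
    (s : Fin n → Bool) (w : Fin n) : Prop :=
  s w = false ∧ IsGCSlin hn B (Function.update s w true)

/-- The least adjustable position (0-based) of the GCS `s`. -/
def leastAdj {n' n : ℕ} (hn : n ≤ n') (B : Matrix (Fin n') (Fin n') ℤ)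
    (s : Fin n → Bool) : ℕ :=
  sInf {w : ℕ | ∃ h : w < n, Adjustable hn B s ⟨w, h⟩}

/-- Flip the least adjustable position of `s` from `0` to `1`. -/
def flipLeast {n' n : ℕ} (hn : n ≤ n') (B : Matrix (Fin n') (Fin n') ℤ)
    (s : Fin n → Bool) : Fin n → Bool :=
  if h : leastAdj hn B s < n then Function.update s ⟨leastAdj hn B s, h⟩ true else s

/-- The downward recursion `Q_{ℓ+1} = q`, `Q_i = Q_{i+1} + (Q_{i+1})_{w_i}·m_i`,
reparametrized upwards: `Rseq q wf mv ℓ t = Q_{ℓ+1-t}`. -/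
def Rseq {n' : ℕ} (q : Fin n' → ℝ) (wf : ℕ → Fin n') (mv : ℕ → Fin n' → ℝ)
    (ℓ : ℕ) : ℕ → Fin n' → ℝ
  | 0 => q
  | t + 1 => fun r =>
      Rseq q wf mv ℓ t r + Rseq q wf mv ℓ t (wf (ℓ - t)) * mv (ℓ - t) r

/-!
Along the flipping sequence the positions `w_i` are pairwise distinct, and at step `i' > i` the
position `w_i` is still a zero of `s^{(i')}`. At a zero `a` of a GCS, `g_Q(s)_a` is the number
of zero out-neighbours of `a` minus one, hence lies in `{-1, 0, 1}`; it is `-1` at an adjustable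
position, and `0` below the least one, because a zero out-neighbour below `a` would lead down to
an adjustable position. So step `i'` leaves the coordinate `w_i` alone when `w_i < w_{i'}`, and
otherwise moves it by at most
`|(Q_{i'+1})_{w_{i'}}| ≤ (1+ε)^{ℓ-i'} q_{w_{i'}} ≤ ε (1+ε)^{ℓ-i'} q_{w_i}`,
since `q_a ≤ ε q_b` for `a < b ≤ n`. Induction on the number of steps gives the bound, and
`(1+ε)^n < 2` keeps `(Q_{i+1})_{w_i}` positive.
-/

open Finset

theorem exists_le_forall_not_of_no_turn {α : Type*} [LinearOrder α] [Finite α] {Z : Set α}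
    {r : α → α → Prop} (hrZ : ∀ c j, r c j → j ∈ Z) (hirr : ∀ c, ¬ r c c)
    (hturn : ∀ c j k, r c j → r j k → c < j → k < j → False) {a : α} (ha : a ∈ Z)
    (hdown : ∀ j < a, ¬ r a j) : ∃ c ∈ Z, a ≤ c ∧ ∀ j, ¬ r c j := by
  have := Fintype.ofFinite α
  let S : Finset α := {c | c ∈ Z ∧ a ≤ c ∧ ∀ j < c, ¬ r c j}
  have haS : a ∈ S := by
    simp only [S, mem_filter, mem_univ, true_and]
    exact ⟨ha, le_rfl, hdown⟩
  obtain ⟨c, hcS, hmax⟩ := S.exists_max_image id ⟨a, haS⟩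
  simp only [S, mem_filter, mem_univ, true_and] at hcS
  refine ⟨c, hcS.1, hcS.2.1, fun j hcj => ?_⟩
  have hlt : c < j := by
    rcases lt_trichotomy j c with h | rfl | h
    · exact (hcS.2.2 j h hcj).elim
    · exact (hirr j hcj).elim
    · exact h
  have hjS : j ∈ S := by
    simp only [S, mem_filter, mem_univ, true_and]
    exact ⟨hrZ c j hcj, hcS.2.1.trans hlt.le, fun k hkj hjk => hturn c j k hcj hjk hlt hkj⟩
  exact (hmax j hjS).not_gt hlt

section LinearQuiver

variable {n' n : ℕ} (hn : n ≤ n') (B : Matrix (Fin n') (Fin n') ℤ)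

def IsZeroOutNeighbor (s : Fin n → Bool) (a j : Fin n) : Prop :=
  0 < B (Fin.castLE hn a) (Fin.castLE hn j) ∧ s j = false

variable {hn B}

theorem LinearOn.eq_succ_or_succ_eq (hlin : LinearOn B n hn) {a j : Fin n}
    (hB : B (Fin.castLE hn a) (Fin.castLE hn j) ≠ 0) : (j : ℕ) = a + 1 ∨ (a : ℕ) = j + 1 := by
  by_contra! h
  exact hB (hlin.2 a j a.isLt j.isLt h.1 h.2)

variable {s : Fin n → Bool}

theorem IsZeroOutNeighbor.irrefl (hsk : IsSkew B) (a : Fin n) : ¬ IsZeroOutNeighbor hn B s a a :=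
  fun h => by have := hsk (Fin.castLE hn a) (Fin.castLE hn a); have := h.1; omega

theorem IsZeroOutNeighbor.lt_iff_lt (hsk : IsSkew B) (hlin : LinearOn B n hn) {c j k : Fin n}
    (hcj : IsZeroOutNeighbor hn B s c j) (hjk : IsZeroOutNeighbor hn B s j k) : c < j ↔ j < k := by
  have hkc : (k : ℕ) ≠ c := fun h => by
    have := hsk (Fin.castLE hn c) (Fin.castLE hn j)
    rw [show k = c from Fin.ext h] at hjk
    have := hcj.1
    exact absurd hjk.1 (by omega)
  have := hlin.eq_succ_or_succ_eq hcj.1.ne'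
  have := hlin.eq_succ_or_succ_eq hjk.1.ne'
  simp only [Fin.lt_def]
  omega

theorem adjustable_iff (hsk : IsSkew B) (hs : IsGCSlin hn B s) (w : Fin n) :
    Adjustable hn B s w ↔ s w = false ∧ ∀ j, ¬ IsZeroOutNeighbor hn B s w j := by
  refine and_congr_right fun hw => ⟨fun hgcs j hwj => ?_, fun hfree i j hij hij' => ?_⟩
  · have hjw : j ≠ w := by rintro rfl; exact hwj.irrefl hsk
    exact hgcs w j hwj.1 (by simp [hjw, hwj.2])
  · have hjw : j ≠ w := by rintro rfl; simp at hij'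
    by_cases hiw : i = w
    · subst hiw
      exact hfree j ⟨hij, by simpa [hjw] using hij'.2⟩
    · exact hs i j hij (by simpa [hiw, hjw] using hij')

theorem exists_adjustable_ge (hsk : IsSkew B) (hlin : LinearOn B n hn) (hs : IsGCSlin hn B s)
    {a : Fin n} (ha : s a = false) (hdown : ∀ j < a, ¬ IsZeroOutNeighbor hn B s a j) :
    ∃ w, a ≤ w ∧ Adjustable hn B s w := by
  obtain ⟨w, hw, haw, hfree⟩ := exists_le_forall_not_of_no_turn (Z := {j | s j = false})
    (fun _ _ h => h.2) (IsZeroOutNeighbor.irrefl hsk)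
    (fun _ _ _ hcj hjk hc hk => ((hcj.lt_iff_lt hsk hlin hjk).mp hc).asymm hk) ha hdown
  exact ⟨w, haw, (adjustable_iff hsk hs w).mpr ⟨hw, hfree⟩⟩

theorem exists_adjustable_le (hsk : IsSkew B) (hlin : LinearOn B n hn) (hs : IsGCSlin hn B s)
    {a : Fin n} (ha : s a = false) (hup : ∀ j, a < j → ¬ IsZeroOutNeighbor hn B s a j) :
    ∃ w ≤ a, Adjustable hn B s w := by
  obtain ⟨w, hw, haw, hfree⟩ := exists_le_forall_not_of_no_turn (α := (Fin n)ᵒᵈ)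
    (Z := {j | s j = false}) (fun _ _ h => h.2) (IsZeroOutNeighbor.irrefl hsk)
    (fun _ _ _ hcj hjk hc hk => ((hcj.lt_iff_lt hsk hlin hjk).mpr hk).asymm hc) ha hup
  exact ⟨w, haw, (adjustable_iff hsk hs w).mpr ⟨hw, hfree⟩⟩

theorem exists_adjustable_lt (hsk : IsSkew B) (hlin : LinearOn B n hn) (hs : IsGCSlin hn B s)
    {a j : Fin n} (haj : IsZeroOutNeighbor hn B s a j) (hja : j < a) :
    ∃ w < a, Adjustable hn B s w := by
  obtain ⟨w, hwj, hw⟩ := exists_adjustable_le hsk hlin hs haj.2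
    fun k hjk hk => ((haj.lt_iff_lt hsk hlin hk).mpr hjk).asymm hja
  exact ⟨w, hwj.trans_lt hja, hw⟩

theorem exists_adjustable (hsk : IsSkew B) (hlin : LinearOn B n hn) (hs : IsGCSlin hn B s)
    {a : Fin n} (ha : s a = false) : ∃ w, Adjustable hn B s w := by
  by_cases h : ∃ j < a, IsZeroOutNeighbor hn B s a j
  · obtain ⟨j, hja, haj⟩ := h
    obtain ⟨w, -, hw⟩ := exists_adjustable_lt hsk hlin hs haj hja
    exact ⟨w, hw⟩
  · push Not at h
    obtain ⟨w, -, hw⟩ := exists_adjustable_ge hsk hlin hs ha h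
    exact ⟨w, hw⟩

end LinearQuiver

section DegreeVector

variable {n' n : ℕ} {hn : n ≤ n'} {B : Matrix (Fin n') (Fin n') ℤ} {s : Fin n → Bool}

theorem deg1to_castLE_eq_zero (hs : IsGCSlin hn B s) {a : Fin n} (ha : s a = false) :
    deg1to hn B s (Fin.castLE hn a) = 0 :=
  sum_eq_zero fun j _ => by
    split_ifs with hj
    · exact Int.toNat_eq_zero.mpr (not_lt.mp fun hja => hs j a hja ⟨hj, ha⟩)
    · rfl

theorem deg0from_castLE_eq_card (hA1 : ∀ i j, (B i j).natAbs ≤ 1) (a : Fin n) :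
    deg0from hn B s (Fin.castLE hn a) = #{j | IsZeroOutNeighbor hn B s a j} := by
  rw [card_filter, deg0from]
  refine sum_congr rfl fun j _ => ?_
  have := hA1 (Fin.castLE hn a) (Fin.castLE hn j)
  simp only [IsZeroOutNeighbor]
  by_cases hj : s j = false
  · simp only [hj, and_true, if_true]
    split_ifs <;> omega
  · simp [hj]

theorem gQ_castLE_eq_card_sub_one (hA1 : ∀ i j, (B i j).natAbs ≤ 1) (hs : IsGCSlin hn B s)
    {a : Fin n} (ha : s a = false) :
    gQ hn B s (Fin.castLE hn a) = #{j | IsZeroOutNeighbor hn B s a j} - 1 := by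
  have hlt : ((Fin.castLE hn a : Fin n') : ℕ) < n := a.isLt
  rw [gQ, if_pos (Or.inl hlt), deg1to_castLE_eq_zero hs ha, deg0from_castLE_eq_card hA1]
  simp

theorem card_isZeroOutNeighbor_le_two (hlin : LinearOn B n hn) (a : Fin n) :
    #{j | IsZeroOutNeighbor hn B s a j} ≤ 2 := by
  refine (card_le_card_of_injOn Fin.val (t := {(a : ℕ) + 1, (a : ℕ) - 1}) (fun j hj => ?_)
    Fin.val_injective.injOn).trans card_le_two
  simp only [coe_filter, mem_univ, true_and, Set.mem_ofPred_eq] at hj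
  rcases hlin.eq_succ_or_succ_eq hj.1.ne' with h | h <;> simp [h]

theorem gQ_castLE_of_adjustable (hsk : IsSkew B) (hA1 : ∀ i j, (B i j).natAbs ≤ 1)
    (hs : IsGCSlin hn B s) {w : Fin n} (hw : Adjustable hn B s w) :
    gQ hn B s (Fin.castLE hn w) = -1 := by
  rw [gQ_castLE_eq_card_sub_one hA1 hs hw.1, card_eq_zero.mpr]
  · rfl
  · exact filter_eq_empty_iff.mpr fun j _ => ((adjustable_iff hsk hs w).mp hw).2 j

theorem abs_gQ_castLE_le_one (hA1 : ∀ i j, (B i j).natAbs ≤ 1) (hlin : LinearOn B n hn)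
    (hs : IsGCSlin hn B s) {a : Fin n} (ha : s a = false) : |gQ hn B s (Fin.castLE hn a)| ≤ 1 := by
  rw [gQ_castLE_eq_card_sub_one hA1 hs ha, abs_le]
  have := card_isZeroOutNeighbor_le_two (s := s) hlin a
  omega

theorem gQ_castLE_eq_zero_of_lt_leastAdj (hsk : IsSkew B) (hA1 : ∀ i j, (B i j).natAbs ≤ 1)
    (hlin : LinearOn B n hn) (hs : IsGCSlin hn B s) {a : Fin n} (ha : s a = false)
    (hlt : (a : ℕ) < leastAdj hn B s) : gQ hn B s (Fin.castLE hn a) = 0 := by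
  have hnot : ∀ w ≤ a, ¬ Adjustable hn B s w := fun w hwa hw =>
    Nat.notMem_of_lt_sInf (lt_of_le_of_lt (Fin.le_def.mp hwa) hlt) ⟨w.isLt, hw⟩
  have hsucc : ∀ j, IsZeroOutNeighbor hn B s a j → (j : ℕ) = a + 1 := fun j haj => by
    rcases lt_trichotomy j a with hja | rfl | haj'
    · obtain ⟨w, hwa, hw⟩ := exists_adjustable_lt hsk hlin hs haj hja
      exact (hnot w hwa.le hw).elim
    · exact (IsZeroOutNeighbor.irrefl hsk j haj).elim
    · rcases hlin.eq_succ_or_succ_eq haj.1.ne' with h | h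
      · exact h
      · exact absurd haj' (by rw [Fin.lt_def]; omega)
  obtain ⟨j, haj⟩ : ∃ j, IsZeroOutNeighbor hn B s a j := by
    by_contra! h
    exact hnot a le_rfl ((adjustable_iff hsk hs a).mpr ⟨ha, h⟩)
  have hcard : #{j | IsZeroOutNeighbor hn B s a j} = 1 := by
    refine card_eq_one.mpr ⟨j, eq_singleton_iff_unique_mem.mpr ⟨by simpa using haj, ?_⟩⟩
    intro k hk
    exact Fin.ext ((hsucc k (by simpa using hk)).trans (hsucc j haj).symm)
  rw [gQ_castLE_eq_card_sub_one hA1 hs ha, hcard]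
  rfl

end DegreeVector

theorem le_mul_of_lt_of_chain {n' n : ℕ} (hn : n ≤ n') {ε : ℝ} (hε : 0 ≤ ε) (hε1 : ε ≤ 1)
    {q : Fin n' → ℝ} (hq : ∀ j, 0 < q j)
    (hchain : ∀ (r : ℕ) (h : r + 1 < n), q ⟨r, by omega⟩ ≤ ε * q ⟨r + 1, by omega⟩)
    {a b : Fin n} (hab : a < b) : q (Fin.castLE hn a) ≤ ε * q (Fin.castLE hn b) := by
  obtain ⟨a, ha⟩ := a
  obtain ⟨b, hb⟩ := b
  rw [Fin.mk_lt_mk] at hab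
  induction b with
  | zero => omega
  | succ b ih =>
    have hstep := hchain b hb
    rcases (Nat.lt_succ_iff.mp hab).eq_or_lt with rfl | hab
    · exact hstep
    · have hab' : q ⟨a, _⟩ ≤ ε * q ⟨b, _⟩ := ih (by omega) hab
      have hqb : 0 < q ⟨b + 1, by omega⟩ := hq _
      show q ⟨a, _⟩ ≤ ε * q ⟨b + 1, _⟩
      nlinarith [mul_le_mul_of_nonneg_left hstep hε, mul_nonneg hε (sub_nonneg.mpr hε1)]

section FlipSequence

variable {n' n : ℕ} {hn : n ≤ n'} {B : Matrix (Fin n') (Fin n') ℤ} {s : Fin n → Bool}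

theorem exists_eq_false_of_card_lt (h : #{i | s i = true} < n) : ∃ a, s a = false := by
  by_contra! hs
  have hall : filter (fun i => s i = true) univ = univ :=
    filter_true_of_mem fun i _ => by simpa using hs i
  exact h.ne (by rw [hall, card_univ, Fintype.card_fin])

theorem exists_adjustable_eq_leastAdj (hsk : IsSkew B) (hlin : LinearOn B n hn)
    (hs : IsGCSlin hn B s) {a : Fin n} (ha : s a = false) :
    ∃ w : Fin n, (w : ℕ) = leastAdj hn B s ∧ Adjustable hn B s w := by
  obtain ⟨w, hw⟩ := exists_adjustable hsk hlin hs ha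
  obtain ⟨hlt, hadj⟩ := Nat.sInf_mem (s := {w : ℕ | ∃ h : w < n, Adjustable hn B s ⟨w, h⟩})
    ⟨w, w.isLt, hw⟩
  exact ⟨_, rfl, hadj⟩

theorem flipLeast_eq_update {w : Fin n} (hw : (w : ℕ) = leastAdj hn B s) :
    flipLeast hn B s = Function.update s w true := by
  rw [flipLeast, dif_pos (hw ▸ w.isLt)]
  congr
  exact hw.symm

theorem le_flipLeast : s ≤ flipLeast hn B s := by
  unfold flipLeast
  split_ifs
  · intro i
    rw [Function.update_apply]
    split_ifs <;> simp
  · exact le_rfl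

theorem monotone_iterate_flipLeast : Monotone fun t => (flipLeast hn B)^[t] s :=
  monotone_nat_of_le_succ fun t => by
    simp only [Function.iterate_succ_apply']
    exact le_flipLeast

theorem card_update_true {w : Fin n} (hw : s w = false) :
    #{i | Function.update s w true i = true} = #{i | s i = true} + 1 := by
  have : filter (fun i => Function.update s w true i = true) univ =
      insert w (filter (fun i => s i = true) univ) := by
    ext i
    by_cases hi : i = w <;> simp [hi, Function.update_apply]
  rw [this, card_insert_of_notMem (by simp [hw])]

theorem isGCSlin_flipLeast_and_card (hsk : IsSkew B) (hlin : LinearOn B n hn)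
    (hs : IsGCSlin hn B s) (h : #{i | s i = true} < n) :
    IsGCSlin hn B (flipLeast hn B s) ∧
      #{i | flipLeast hn B s i = true} = #{i | s i = true} + 1 := by
  obtain ⟨a, ha⟩ := exists_eq_false_of_card_lt h
  obtain ⟨w, hwl, hw⟩ := exists_adjustable_eq_leastAdj hsk hlin hs ha
  rw [flipLeast_eq_update hwl]
  exact ⟨hw.2, card_update_true hw.1⟩

theorem isGCSlin_iterate_flipLeast_and_card (hsk : IsSkew B) (hlin : LinearOn B n hn)
    (hs : IsGCSlin hn B s) {t : ℕ} (ht : #{i | s i = true} + t ≤ n) :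
    IsGCSlin hn B ((flipLeast hn B)^[t] s) ∧
      #{i | (flipLeast hn B)^[t] s i = true} = #{i | s i = true} + t := by
  induction t with
  | zero => exact ⟨hs, rfl⟩
  | succ t ih =>
    obtain ⟨hgcs, hcard⟩ := ih (by omega)
    rw [Function.iterate_succ_apply']
    obtain ⟨hgcs', hcard'⟩ := isGCSlin_flipLeast_and_card hsk hlin hgcs (by omega)
    exact ⟨hgcs', by omega⟩

theorem exists_adjustable_iterate_flipLeast (hsk : IsSkew B) (hlin : LinearOn B n hn)
    (hs : IsGCSlin hn B s) {t : ℕ} (ht : #{i | s i = true} + t < n) :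
    IsGCSlin hn B ((flipLeast hn B)^[t] s) ∧ ∃ w : Fin n,
      (w : ℕ) = leastAdj hn B ((flipLeast hn B)^[t] s) ∧
        Adjustable hn B ((flipLeast hn B)^[t] s) w := by
  obtain ⟨hgcs, hcard⟩ := isGCSlin_iterate_flipLeast_and_card hsk hlin hs ht.le
  obtain ⟨a, ha⟩ := exists_eq_false_of_card_lt (s := (flipLeast hn B)^[t] s) (by omega)
  exact ⟨hgcs, exists_adjustable_eq_leastAdj hsk hlin hgcs ha⟩

theorem gQ_iterate_flipLeast_leastAdj (hsk : IsSkew B) (hA1 : ∀ i j, (B i j).natAbs ≤ 1)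
    (hlin : LinearOn B n hn) (hs : IsGCSlin hn B s) {t : ℕ} (ht : #{i | s i = true} + t < n) :
    ∃ w : Fin n, (w : ℕ) = leastAdj hn B ((flipLeast hn B)^[t] s) ∧
      gQ hn B ((flipLeast hn B)^[t] s) (Fin.castLE hn w) = -1 := by
  obtain ⟨hgcs, w, hwl, hw⟩ := exists_adjustable_iterate_flipLeast hsk hlin hs ht
  exact ⟨w, hwl, gQ_castLE_of_adjustable hsk hA1 hgcs hw⟩

theorem gQ_iterate_flipLeast_of_lt (hsk : IsSkew B) (hA1 : ∀ i j, (B i j).natAbs ≤ 1)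
    (hlin : LinearOn B n hn) (hs : IsGCSlin hn B s) {t u : ℕ} (htu : t < u)
    (hu : #{i | s i = true} + u < n) {a b : Fin n}
    (ha : (a : ℕ) = leastAdj hn B ((flipLeast hn B)^[t] s))
    (hb : (b : ℕ) = leastAdj hn B ((flipLeast hn B)^[u] s)) :
    gQ hn B ((flipLeast hn B)^[t] s) (Fin.castLE hn b) = 0 ∨
      a < b ∧ |gQ hn B ((flipLeast hn B)^[t] s) (Fin.castLE hn b)| ≤ 1 := by
  obtain ⟨hgcs, a', ha', -⟩ := exists_adjustable_iterate_flipLeast hsk hlin hs (t := t) (by omega)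
  obtain ⟨-, b', hb', hbdj⟩ := exists_adjustable_iterate_flipLeast hsk hlin hs hu
  obtain rfl : a = a' := Fin.ext (ha.trans ha'.symm)
  obtain rfl : b = b' := Fin.ext (hb.trans hb'.symm)
  have hmono := monotone_iterate_flipLeast (hn := hn) (B := B) (s := s)
  have hbt : (flipLeast hn B)^[t] s b = false :=
    Bool.eq_false_of_le_false ((hmono htu.le b).trans_eq hbdj.1)
  have hab : a ≠ b := by
    rintro rfl
    have hat : (flipLeast hn B)^[t + 1] s a = true := by
      rw [Function.iterate_succ_apply', flipLeast_eq_update ha', Function.update_self]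
    exact absurd (Bool.eq_false_of_le_false ((hat.symm.trans_le (hmono htu a)).trans_eq hbdj.1))
      (by decide)
  rcases lt_or_gt_of_ne hab with hlt | hlt
  · exact Or.inr ⟨hlt, abs_gQ_castLE_le_one hA1 hlin hgcs hbt⟩
  · exact Or.inl (gQ_castLE_eq_zero_of_lt_leastAdj hsk hA1 hlin hgcs hbt (ha' ▸ hlt))

theorem gQ_iterate_flipLeast_bending (hsk : IsSkew B) (hA1 : ∀ i j, (B i j).natAbs ≤ 1)
    (hlin : LinearOn B n hn) (hs : IsGCSlin hn B s) {ε : ℝ} (hε : 0 ≤ ε) (hε1 : ε ≤ 1)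
    {q : Fin n' → ℝ} (hq : ∀ j, 0 < q j)
    (hchain : ∀ (r : ℕ) (h : r + 1 < n), q ⟨r, by omega⟩ ≤ ε * q ⟨r + 1, by omega⟩)
    {ℓ : ℕ} (hℓ : #{i | s i = true} + ℓ = n) {wf : ℕ → Fin n'}
    (hwf : ∀ i (a : Fin n), (a : ℕ) = leastAdj hn B ((flipLeast hn B)^[ℓ - i] s) →
      wf i = Fin.castLE hn a)
    {i i' : ℕ} (hi : 1 ≤ i) (hii' : i < i') (hi' : i' ≤ ℓ) :
    let m : ℝ := gQ hn B ((flipLeast hn B)^[ℓ - i'] s) (wf i)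
    m = 0 ∨ |m| ≤ 1 ∧ q (wf i') ≤ ε * q (wf i) := by
  obtain ⟨a, ha, -⟩ := gQ_iterate_flipLeast_leastAdj hsk hA1 hlin hs (t := ℓ - i') (by omega)
  obtain ⟨b, hb, -⟩ := gQ_iterate_flipLeast_leastAdj hsk hA1 hlin hs (t := ℓ - i) (by omega)
  rw [hwf i' a ha, hwf i b hb]
  rcases gQ_iterate_flipLeast_of_lt hsk hA1 hlin hs (by omega : ℓ - i' < ℓ - i) (by omega) ha hb
    with h0 | ⟨hab, h1⟩
  · exact Or.inl (by simp [h0])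
  · exact Or.inr ⟨by exact_mod_cast h1, le_mul_of_lt_of_chain hn hε hε1 hq hchain hab⟩

end FlipSequence

section BrokenLine

variable {n' : ℕ} (q : Fin n' → ℝ) (wf : ℕ → Fin n') (mv : ℕ → Fin n' → ℝ) (ℓ : ℕ)

theorem Rseq_add_one_sub {i : ℕ} (hi : i ≤ ℓ) (r : Fin n') :
    Rseq q wf mv ℓ (ℓ + 1 - i) r =
      Rseq q wf mv ℓ (ℓ - i) r + Rseq q wf mv ℓ (ℓ - i) (wf i) * mv i r := by
  rw [show ℓ + 1 - i = ℓ - i + 1 by omega, Rseq, Nat.sub_sub_self hi]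

theorem abs_Rseq_sub_le {ε : ℝ} (hε : 0 ≤ ε) (hq : ∀ j, 0 ≤ q j)
    (hbend : ∀ i i', 1 ≤ i → i < i' → i' ≤ ℓ →
      mv i' (wf i) = 0 ∨ |mv i' (wf i)| ≤ 1 ∧ q (wf i') ≤ ε * q (wf i)) :
    ∀ t i, 1 ≤ i → i + t ≤ ℓ →
      |Rseq q wf mv ℓ t (wf i) - q (wf i)| ≤ ((1 + ε) ^ t - 1) * q (wf i) := by
  intro t
  induction t with
  | zero => simp [Rseq]
  | succ t ih =>
    intro i hi hit
    simp only [Rseq, pow_succ]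
    set c := (1 + ε) ^ t
    have hc : 0 ≤ c := by positivity
    have hQ := hq (wf i)
    have hx := ih i hi (by omega)
    -- The step from `t` to `t + 1` is the paper's step `i' = ℓ - t`.
    have hy := abs_le.mp (ih (ℓ - t) (by omega) (by omega))
    have hy' : |Rseq q wf mv ℓ t (wf (ℓ - t))| ≤ c * q (wf (ℓ - t)) :=
      abs_le.mpr ⟨by linarith [hq (wf (ℓ - t))], by linarith⟩
    rcases hbend i (ℓ - t) hi (by omega) (by omega) with hm | ⟨hm, hqle⟩
    · rw [hm, mul_zero, add_zero]
      nlinarith [mul_nonneg (mul_nonneg hc hε) hQ]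
    · calc _ = |(Rseq q wf mv ℓ t (wf i) - q (wf i)) +
              Rseq q wf mv ℓ t (wf (ℓ - t)) * mv (ℓ - t) (wf i)| := by ring_nf
        _ ≤ (c - 1) * q (wf i) + c * q (wf (ℓ - t)) * 1 :=
          (abs_add_le _ _).trans (add_le_add hx (by
            rw [abs_mul]; exact mul_le_mul hy' hm (abs_nonneg _) (mul_nonneg hc (hq _))))
        _ ≤ (c * (1 + ε) - 1) * q (wf i) := by nlinarith [mul_le_mul_of_nonneg_left hqle hc]

theorem Rseq_pos {ε : ℝ} (hε : 0 ≤ ε) (hε2 : (1 + ε) ^ ℓ < 2) (hq : ∀ j, 0 < q j)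
    (hbend : ∀ i i', 1 ≤ i → i < i' → i' ≤ ℓ →
      mv i' (wf i) = 0 ∨ |mv i' (wf i)| ≤ 1 ∧ q (wf i') ≤ ε * q (wf i))
    {i : ℕ} (hi : 1 ≤ i) (hiℓ : i ≤ ℓ) : 0 < Rseq q wf mv ℓ (ℓ - i) (wf i) := by
  have h := abs_le.mp
    (abs_Rseq_sub_le q wf mv ℓ hε (fun j => (hq j).le) hbend (ℓ - i) i hi (by omega))
  have : (1 + ε) ^ (ℓ - i) ≤ (1 + ε) ^ ℓ := pow_le_pow_right₀ (by linarith) (by omega)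
  nlinarith [hq (wf i)]

end BrokenLine

/-- **Theorem (the bending points of the broken line are well defined).**
With `s^{(ℓ)} = s`, `w_i` the least adjustable position of `s^{(i)}`, `s^{(i-1)}`
obtained from `s^{(i)}` by flipping `w_i`, `m_i = g_Q(s^{(i)})`, `Q_{ℓ+1} = q` and
`Q_i = Q_{i+1} + (Q_{i+1})_{w_i}·m_i`:  for all `1 ≤ i < i' ≤ ℓ+1` one has
`|(Q_{i'})_{w_i} − q_{w_i}| ≤ ((1+ε)^{ℓ+1−i'} − 1)·q_{w_i}`; in particular
`(Q_{i+1})_{w_i} > 0`, so `Q_i − Q_{i+1}` is a positive multiple of `m_i`, and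
`(Q_i)_{w_i} = 0`. -/
theorem broken_line_bending_points
    {n' n : ℕ} (hn : n ≤ n')
    (B : Matrix (Fin n') (Fin n') ℤ) (hA : IsTypeA B) (hlin : LinearOn B n hn)
    (s : Fin n → Bool) (hs : IsGCSlin hn B s)
    (hl : 1 ≤ n - (Finset.univ.filter fun i => s i = true).card)
    (ε : ℝ) (hε : 0 < ε) (hε2 : (1 + ε) ^ n < 2)
    (q : Fin n' → ℝ) (hq : ∀ j, 0 < q j)
    (hqchain : ∀ (r : ℕ) (h : r + 1 < n),
      q ⟨r, by omega⟩ ≤ ε * q ⟨r + 1, by omega⟩) :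
    let ℓ : ℕ := n - (Finset.univ.filter fun i => s i = true).card
    let seqS : ℕ → (Fin n → Bool) := fun t => (flipLeast hn B)^[t] s
    let wf : ℕ → Fin n' := fun i =>
      ⟨leastAdj hn B (seqS (ℓ - i)) % n', Nat.mod_lt _ (by omega)⟩
    let mv : ℕ → Fin n' → ℝ := fun i r => ((gQ hn B (seqS (ℓ - i)) r : ℤ) : ℝ)
    let Qv : ℕ → Fin n' → ℝ := fun i => Rseq q wf mv ℓ (ℓ + 1 - i)
    (∀ i i' : ℕ, 1 ≤ i → i < i' → i' ≤ ℓ + 1 →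
      |Qv i' (wf i) - q (wf i)| ≤ ((1 + ε) ^ (ℓ + 1 - i') - 1) * q (wf i)) ∧
    (∀ i : ℕ, 1 ≤ i → i ≤ ℓ → 0 < Qv (i + 1) (wf i)) ∧
    (∀ i : ℕ, 1 ≤ i → i ≤ ℓ →
      ∃ c : ℝ, 0 < c ∧ ∀ r, Qv i r - Qv (i + 1) r = c * mv i r) ∧
    (∀ i : ℕ, 1 ≤ i → i ≤ ℓ → Qv i (wf i) = 0) := by
  intro ℓ seqS wf mv Qv
  obtain ⟨hsk, hA1, -⟩ := hA
  have hℓ : #{i | s i = true} + ℓ = n := by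
    have : #{i | s i = true} ≤ n := (card_le_univ _).trans_eq (Fintype.card_fin n)
    omega
  have hε1 : ε ≤ 1 := by
    have := le_self_pow₀ (by linarith : 1 ≤ 1 + ε) (by omega : n ≠ 0)
    linarith
  have hwf : ∀ i (a : Fin n), (a : ℕ) = leastAdj hn B (seqS (ℓ - i)) → wf i = Fin.castLE hn a :=
    fun i a ha => Fin.ext (by simp [wf, ← ha, Nat.mod_eq_of_lt (a.2.trans_le hn)])
  have hbend : ∀ i i', 1 ≤ i → i < i' → i' ≤ ℓ →
      mv i' (wf i) = 0 ∨ |mv i' (wf i)| ≤ 1 ∧ q (wf i') ≤ ε * q (wf i) := fun i i' hi hii' hi' =>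
    gQ_iterate_flipLeast_bending hsk hA1 hlin hs hε.le hε1 hq hqchain hℓ hwf hi hii' hi'
  have hQsucc : ∀ i, Qv (i + 1) = Rseq q wf mv ℓ (ℓ - i) := fun i => by simp [Qv]
  have hpos : ∀ i, 1 ≤ i → i ≤ ℓ → 0 < Qv (i + 1) (wf i) := fun i hi hiℓ => by
    rw [hQsucc]
    exact Rseq_pos q wf mv ℓ hε.le
      ((pow_le_pow_right₀ (by linarith) (by omega)).trans_lt hε2) hq hbend hi hiℓ
  refine ⟨fun i i' hi hii' _ => ?_, hpos, fun i hi hiℓ => ⟨_, hpos i hi hiℓ, fun r => ?_⟩,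
    fun i hi hiℓ => ?_⟩
  · exact abs_Rseq_sub_le q wf mv ℓ hε.le (fun j => (hq j).le) hbend _ i hi (by omega)
  · simp only [hQsucc, Qv, Rseq_add_one_sub q wf mv ℓ hiℓ]
    ring
  · obtain ⟨a, ha, hga⟩ := gQ_iterate_flipLeast_leastAdj hsk hA1 hlin hs (t := ℓ - i) (by omega)
    simp only [Qv, Rseq_add_one_sub q wf mv ℓ hiℓ, mv, hwf i a ha]
    rw [hga]
    push_cast
    ring
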